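/- Let 1 ≤ j ≤ n be integers. Then for every u ∈ ℂ, Σ_{k=j}^{n} binom(n+k, n−k) binom(2k, k−j) u^k = u^j · P_{n−j}^{(2j,0)}(2u+1), where P_{n−j}^{(2j,0)} is the Jacobi polynomial of degree n−j with parameters (2j, 0). -/

import Mathlib

open scoped BigOperators

/-- Pochhammer symbol `(a)_k = a(a+1)⋯(a+k-1)` over ℂ. -/
noncomputable def pochC (a : ℂ) (k : ℕ) : ℂ := ∏ i ∈ Finset.range k, (a + i)

/-- Jacobi polynomial `P_n^{(a,b)}(x)`. -/
noncomputable def Jac (a b : ℝ) (n : ℕ) (x : ℂ) : ℂ :=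
  (pochC ((a : ℂ) + 1) n / (n.factorial : ℂ)) * ∑ k ∈ Finset.range (n + 1),
    pochC (-(n : ℂ)) k * pochC ((n : ℂ) + a + b + 1) k /
      (pochC ((a : ℂ) + 1) k * (k.factorial : ℂ)) * ((1 - x) / 2) ^ k

/-! For integer parameters `(N, 0)` every Pochhammer ratio in the hypergeometric sum for
`P_m^{(N,0)}` is a ratio of factorials, so its `i`-th coefficient is the trinomial
`(m+N+i)! / ((m-i)! i! (N+i)!) = C(m+N+i, m-i) C(N+2i, i)`, up to the sign `(-1)^i`, which is
absorbed by `(1-x)/2 = -(x-1)/2`. At `x = 2u+1`, `N = 2j` and `n = j+m`, the reindexing `k = j+i`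
turns this sum into the left-hand side. -/

open Finset Nat

theorem pochC_eq_eval_ascPochhammer (a : ℂ) (k : ℕ) :
    pochC a k = (ascPochhammer ℂ k).eval a := by
  induction k with
  | zero => simp [pochC]
  | succ k ih => rw [pochC, prod_range_succ, ← pochC, ih, ascPochhammer_succ_eval]

theorem pochC_natCast_add_one (N k : ℕ) : pochC (N + 1) k = (N + k)! / N ! := by
  rw [eq_div_iff (Nat.cast_ne_zero.mpr (factorial_ne_zero N)), pochC_eq_eval_ascPochhammer,
    ← Nat.cast_add_one, ← cast_ascFactorial, mul_comm, ← Nat.cast_mul,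
    factorial_mul_ascFactorial]

theorem pochC_neg_natCast {m k : ℕ} (h : k ≤ m) :
    pochC (-m) k = (-1) ^ k * (m ! / (m - k)! : ℂ) := by
  rw [pochC_eq_eval_ascPochhammer, ascPochhammer_eval_neg_eq_descPochhammer,
    descPochhammer_eval_eq_descFactorial, ← factorial_mul_descFactorial h, Nat.cast_mul,
    mul_div_cancel_left₀ _ (Nat.cast_ne_zero.mpr (factorial_ne_zero _))]

theorem choose_mul_choose_mul_factorial {m i : ℕ} (N : ℕ) (h : i ≤ m) :
    (m + N + i).choose (m - i) * (N + 2 * i).choose i * ((m - i)! * i ! * (N + i)!) =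
      (m + N + i)! := by
  have outer := choose_mul_factorial_mul_factorial (show m - i ≤ m + N + i by omega)
  have inner := choose_mul_factorial_mul_factorial (show i ≤ N + 2 * i by omega)
  rw [show m + N + i - (m - i) = N + 2 * i by omega, ← inner,
    show N + 2 * i - i = N + i by omega] at outer
  rw [← outer]
  ring

theorem Jac_natCast_zero (N m : ℕ) (x : ℂ) :
    Jac N 0 m x = ∑ i ∈ range (m + 1),
      ((m + N + i).choose (m - i) : ℂ) * ((N + 2 * i).choose i : ℂ) * ((x - 1) / 2) ^ i := by
  rw [Jac, mul_sum]
  refine sum_congr rfl fun i hi => ?_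
  have him : i ≤ m := Nat.lt_succ_iff.mp (mem_range.mp hi)
  have hkey := congrArg (Nat.cast (R := ℂ)) (choose_mul_choose_mul_factorial N him)
  push_cast at hkey
  simp only [Complex.ofReal_natCast, Complex.ofReal_zero, add_zero]
  rw [← Nat.cast_add, pochC_natCast_add_one, pochC_natCast_add_one, pochC_natCast_add_one,
    pochC_neg_natCast him, show (1 - x) / 2 = -((x - 1) / 2) by ring, neg_pow ((x - 1) / 2),
    ← hkey, add_comm N m]
  field_simp [Nat.factorial_ne_zero]
  rw [← pow_mul, pow_mul', neg_one_sq, one_pow, one_mul]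

theorem stmt13_general (j n : ℕ) (hjn : j ≤ n) (u : ℂ) :
    ∑ k ∈ Finset.Icc j n, ((n + k).choose (n - k) : ℂ) * ((2 * k).choose (k - j) : ℂ) * u ^ k =
      u ^ j * Jac (2 * j) 0 (n - j) (2 * u + 1) := by
  obtain ⟨m, rfl⟩ := Nat.exists_eq_add_of_le hjn
  have h2j : (2 * j : ℝ) = ((2 * j : ℕ) : ℝ) := by push_cast; rfl
  rw [Nat.add_sub_cancel_left, h2j, Jac_natCast_zero, mul_sum, ← Ico_add_one_right_eq_Icc,
    sum_Ico_eq_sum_range, show j + m + 1 - j = m + 1 by omega]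
  refine sum_congr rfl fun i _ => ?_
  rw [show j + m + (j + i) = m + 2 * j + i by omega, show j + m - (j + i) = m - i by omega,
    show 2 * (j + i) = 2 * j + 2 * i by omega, Nat.add_sub_cancel_left,
    show (2 * u + 1 - 1) / 2 = u by ring, pow_add]
  ring

theorem stmt13 (j n : ℕ) (hj : 1 ≤ j) (hjn : j ≤ n) (u : ℂ) :
    ∑ k ∈ Finset.Icc j n, ((n + k).choose (n - k) : ℂ) * ((2 * k).choose (k - j) : ℂ) * u ^ k =
      u ^ j * Jac (2 * j) 0 (n - j) (2 * u + 1) :=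
  stmt13_general j n hjn u
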